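/- arXiv:1311.2774 — 2 statements merged into one kernel-verified Lean document; each statement's English description precedes it below -/
import Mathlib

section
/- Let p be a prime and K a perfect field of characteristic p. Then C(K) is a discrete valuation ring of characteristic 0 whose maximal ideal is generated by p and whose residue field C(K)/p·C(K) is isomorphic to K via the map induced by π. -/
/-!
The Teichmüller map `[r] ↦ τ(r)` is a ring map `ℤK → W(K)` sending `I` into the maximal ideal
`p W(K)` of the discrete valuation ring `W(K)`; as `p` is not a zero divisor there,
`p^ν a ∈ I^(ν+1)` forces `a ∈ I`. Perfectness gives `I ⊆ (p) + I²`: for `r = u^p`, `s = v^p`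
the additivity defect `[r] + [s] - [r + s]` equals `[u]^p + [v]^p - ([u] + [v] - d)^p` with
`d ∈ I`, which vanishes modulo `(p) + I²`. Hence `I^ν ⊆ (p^ν) + I^(ν+1)` and multiplication by `p` shifts the `I`-adic filtration
by exactly one. In the limit, `ker π̄ = p C(K)`, elements outside it are units (their components
are units modulo the nilpotent ideals `I/I^ν`), and `p` is not nilpotent, so every nonzero
element of `C(K)` is `p^n` times a unit.
-/

set_option synthInstance.maxHeartbeats 1000000
set_option maxHeartbeats 1000000

open MonoidAlgebra

/-- `ℤR`: the monoid algebra over `ℤ` of the multiplicative monoid `(R, ·)`. -/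
abbrev ZR (R : Type*) [CommRing R] : Type _ := MonoidAlgebra ℤ R

/-- The canonical ring homomorphism `π : ℤR → R`, `Σ n_r [r] ↦ Σ n_r r`. -/
noncomputable def piHom (R : Type*) [CommRing R] : ZR R →+* R :=
  (MonoidAlgebra.lift ℤ R R (MonoidHom.id R)).toRingHom

/-- The ideal `I = ker (π : ℤR → R)`. -/
noncomputable def Iid (R : Type*) [CommRing R] : Ideal (ZR R) := RingHom.ker (piHom R)

/-- The inverse limit `lim_ν A⧸I^ν` realized as a subring of the product `Π ν, A⧸I^ν`
(families compatible under the canonical factor maps). -/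
def Clim (A : Type*) [CommRing A] (I : Ideal A) : Subring (Π ν : ℕ, A ⧸ I ^ ν) where
  carrier := { x | ∀ ⦃m ν : ℕ⦄ (h : m ≤ ν),
    Ideal.Quotient.factor (Ideal.pow_le_pow_right h) (x ν) = x m }
  zero_mem' := by intro m ν h; simp
  one_mem' := by intro m ν h; simp
  add_mem' := by intro x y hx hy m ν h; simp only [Pi.add_apply, map_add, hx h, hy h]
  mul_mem' := by intro x y hx hy m ν h; simp only [Pi.mul_apply, map_mul, hx h, hy h]
  neg_mem' := by intro x hx m ν h; simp only [Pi.neg_apply, map_neg, hx h]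

/-- The projection of the completion `lim_ν A⧸I^ν` onto its `ν`-th level `A⧸I^ν`. -/
def Ceval (A : Type*) [CommRing A] (I : Ideal A) (ν : ℕ) : Clim A I →+* A ⧸ I ^ ν :=
  (Pi.evalRingHom _ ν).comp (Clim A I).subtype

/-- The canonical map `A → lim_ν A⧸I^ν`. -/
def CofRingHom (A : Type*) [CommRing A] (I : Ideal A) : A →+* Clim A I where
  toFun a := ⟨fun ν => Ideal.Quotient.mk _ a, fun _ _ _ => Ideal.Quotient.factor_mk _ _⟩
  map_one' := rfl
  map_mul' _ _ := rfl
  map_zero' := rfl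
  map_add' _ _ := rfl

/-- `C(R)`: the `I`-adic completion of `ℤR`. -/
noncomputable abbrev CR (R : Type*) [CommRing R] : Type _ := Clim (ZR R) (Iid R)

/-- The canonical projection `π̄ : C(R) → R` induced by `π`. -/
noncomputable def CtoR (R : Type*) [CommRing R] : CR R →+* R :=
  (Ideal.Quotient.lift (Iid R) (piHom R) (fun _ ha => ha)).comp
    (((Ideal.quotEquivOfEq (pow_one (Iid R))).toRingHom).comp (Ceval (ZR R) (Iid R) 1))

namespace Ideal

variable {A : Type*} [CommRing A] {I J : Ideal A}

theorem le_sup_pow_succ_of_le_sup_sq (h : I ≤ J ⊔ I ^ 2) (n : ℕ) : I ≤ J ⊔ I ^ (n + 1) := by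
  induction n with
  | zero => rw [pow_one]; exact le_sup_right
  | succ n ih =>
    refine ih.trans (sup_le le_sup_left ?_)
    calc I ^ (n + 1) = I ^ n * I := pow_succ I n
      _ ≤ I ^ n * (J ⊔ I ^ 2) := mul_mono_right h
      _ = I ^ n * J ⊔ I ^ (n + 2) := by rw [mul_sup, ← pow_add]
      _ ≤ J ⊔ I ^ (n + 1 + 1) := sup_le_sup Ideal.mul_le_right le_rfl

theorem pow_le_pow_sup_pow_succ_of_le_sup_sq (hJI : J ≤ I) (h : I ≤ J ⊔ I ^ 2) (n : ℕ) :
    I ^ n ≤ J ^ n ⊔ I ^ (n + 1) := by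
  induction n with
  | zero => simp
  | succ n ih =>
    have hJn : J ^ n ≤ I ^ n := pow_right_mono hJI n
    calc I ^ (n + 1) = I ^ n * I := pow_succ I n
      _ ≤ (J ^ n ⊔ I ^ (n + 1)) * (J ⊔ I ^ 2) := mul_mono ih h
      _ = J ^ (n + 1) ⊔ J ^ n * I ^ 2 ⊔ (I ^ (n + 1) * J ⊔ I ^ (n + 1) * I ^ 2) := by
        rw [sup_mul, mul_sup, mul_sup, ← pow_succ]
      _ ≤ J ^ (n + 1) ⊔ I ^ (n + 1 + 1) := by
        refine sup_le (sup_le le_sup_left ?_) (sup_le ?_ ?_) <;> refine le_sup_of_le_right ?_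
        · exact (mul_mono_left hJn).trans_eq (by rw [← pow_add])
        · exact (mul_mono_right hJI).trans_eq (pow_succ I _).symm
        · exact (pow_add I _ _).symm.trans_le (pow_le_pow_right (by omega))

end Ideal

namespace Clim

variable {A : Type*} [CommRing A] {I : Ideal A}

theorem mk_eq_apply_of_le (x : Clim A I) {m ν : ℕ} {a : A}
    (ha : Ideal.Quotient.mk (I ^ ν) a = x.1 ν) (h : m ≤ ν) :
    Ideal.Quotient.mk (I ^ m) a = x.1 m := by
  rw [← x.2 h, ← ha, Ideal.Quotient.factor_mk]

theorem isUnit_of_forall_isUnit (x : Clim A I) (hx : ∀ ν, IsUnit (x.1 (ν + 1))) : IsUnit x := by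
  have hu : ∀ ν, IsUnit (x.1 ν) := fun ν =>
    (x.2 ν.le_succ ▸ (hx ν).map (Ideal.Quotient.factor (Ideal.pow_le_pow_right ν.le_succ)))
  refine IsUnit.of_mul_eq_one ⟨fun ν => Ring.inverse (x.1 ν), fun m ν h => ?_⟩ ?_
  · show Ideal.Quotient.factor _ (Ring.inverse (x.1 ν)) = Ring.inverse (x.1 m)
    rw [eq_comm, ← mul_one (Ring.inverse (x.1 m)), Ring.inverse_mul_eq_iff_eq_mul _ _ _ (hu m),
      ← x.2 h, ← map_mul, Ring.mul_inverse_cancel _ (hu ν), map_one]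
  · exact Subtype.ext (funext fun ν => Ring.mul_inverse_cancel _ (hu ν))

theorem apply_succ_mul_eq_zero {ϖ : A} (hϖ : ϖ ∈ I) (y : Clim A I) {ν : ℕ} (hy : y.1 ν = 0) :
    (CofRingHom A I ϖ * y).1 (ν + 1) = 0 := by
  obtain ⟨b, hb⟩ := Ideal.Quotient.mk_surjective (y.1 (ν + 1))
  have hbν : b ∈ I ^ ν := by
    rw [← Ideal.Quotient.eq_zero_iff_mem, mk_eq_apply_of_le y hb ν.le_succ, hy]
  show Ideal.Quotient.mk _ ϖ * y.1 (ν + 1) = 0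
  rw [← hb, ← map_mul, Ideal.Quotient.eq_zero_iff_mem, pow_succ']
  exact Ideal.mul_mem_mul hϖ hbν

theorem exists_eq_mul_of_apply_one_eq_zero (ϖ : A)
    (hgen : ∀ n, I ≤ Ideal.span {ϖ} ⊔ I ^ (n + 1))
    (hcancel : ∀ m a, ϖ * a ∈ I ^ (m + 1) → a ∈ I ^ m)
    (x : Clim A I) (hx : x.1 1 = 0) : ∃ y, x = CofRingHom A I ϖ * y := by
  choose a ha using fun ν => Ideal.Quotient.mk_surjective (x.1 (ν + 1))
  have haI : ∀ ν, a ν ∈ I := fun ν => by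
    rw [← pow_one I, ← Ideal.Quotient.eq_zero_iff_mem, mk_eq_apply_of_le x (ha ν) (by omega), hx]
  have hb : ∀ ν, ∃ b, a ν - ϖ * b ∈ I ^ (ν + 1) := fun ν => by
    obtain ⟨_, hc, d, hd, hcd⟩ := Submodule.mem_sup.mp (hgen ν (haI ν))
    obtain ⟨b, rfl⟩ := Ideal.mem_span_singleton'.mp hc
    exact ⟨b, by rwa [← hcd, mul_comm, add_sub_cancel_left]⟩
  choose b hb using hb
  have ha_sub : ∀ {m ν}, m ≤ ν → a ν - a m ∈ I ^ (m + 1) := fun {m ν} h => by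
    rw [← Ideal.Quotient.eq, mk_eq_apply_of_le x (ha ν) (by omega), ha]
  refine ⟨⟨fun ν => Ideal.Quotient.mk _ (b ν), fun m ν h => ?_⟩, ?_⟩
  · rw [Ideal.Quotient.factor_mk, Ideal.Quotient.eq]
    refine hcancel m _ ?_
    have : ϖ * (b ν - b m) = (a m - ϖ * b m) - (a ν - ϖ * b ν) + (a ν - a m) := by ring
    rw [this]
    exact add_mem (sub_mem (hb m) (Ideal.pow_le_pow_right (by omega) (hb ν))) (ha_sub h)
  · refine Subtype.ext (funext fun ν => ?_)
    show x.1 ν = Ideal.Quotient.mk _ (ϖ * b ν)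
    rw [← mk_eq_apply_of_le x (ha ν) ν.le_succ, Ideal.Quotient.eq]
    exact Ideal.pow_le_pow_right ν.le_succ (hb ν)

end Clim

section MonoidAlgebra

variable {R : Type*} [CommRing R]

theorem ZR.ringHom_ext {S : Type*} [Ring S] {f g : ZR R →+* S}
    (h : ∀ r : R, f (single r 1) = g (single r 1)) : f = g :=
  ringHom_ext' (Subsingleton.elim _ _) (MonoidHom.ext h)

theorem piHom_single (r : R) : piHom R (single r 1) = r := by
  simp [piHom, lift_single]

theorem piHom_surjective : Function.Surjective (piHom R) :=
  fun r => ⟨single r 1, piHom_single r⟩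

variable (R) in
def additivityDefects : Set (ZR R) :=
  {x | ∃ r s : R, x = single r 1 + single s 1 - single (r + s) 1}

theorem Iid_eq_span_additivityDefects : Iid R = Ideal.span (additivityDefects R) := by
  set J := Ideal.span (additivityDefects R)
  refine le_antisymm ?_ ?_
  · let φ : R →+* ZR R ⧸ J :=
      RingHom.mk' ((Ideal.Quotient.mk J : ZR R →* ZR R ⧸ J).comp (of ℤ R)) fun r s => by
        show Ideal.Quotient.mk J (single (r + s) 1) =
          Ideal.Quotient.mk J (single r 1) + Ideal.Quotient.mk J (single s 1)
        rw [← map_add, Ideal.Quotient.eq, ← neg_sub]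
        exact neg_mem (Ideal.subset_span ⟨r, s, rfl⟩)
    have hφ : φ.comp (piHom R) = Ideal.Quotient.mk J :=
      ZR.ringHom_ext fun r => by rw [RingHom.comp_apply, piHom_single]; rfl
    intro x hx
    rw [← Ideal.Quotient.eq_zero_iff_mem, ← hφ, RingHom.comp_apply, (RingHom.mem_ker).mp hx,
      map_zero]
  · rw [Ideal.span_le]
    rintro _ ⟨r, s, rfl⟩
    simp [Iid, piHom_single]

theorem add_pow_prime_of_natCast_eq_zero {S : Type*} [CommRing S] {p : ℕ} (hp : p.Prime)
    (h : (p : S) = 0) (a b : S) : (a + b) ^ p = a ^ p + b ^ p := by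
  obtain ⟨r, hr⟩ := exists_add_pow_prime_eq hp a b
  simpa [h] using hr

variable (p : ℕ)

theorem natCast_mem_Iid [CharP R p] : (p : ZR R) ∈ Iid R := by
  simp [Iid, CharP.cast_eq_zero]

variable [Fact p.Prime]

theorem Iid_le_span_natCast_sup_sq [CharP R p] [PerfectRing R p] :
    Iid R ≤ Ideal.span {(p : ZR R)} ⊔ Iid R ^ 2 := by
  set J := Ideal.span {(p : ZR R)} ⊔ Iid R ^ 2
  suffices Ideal.span (additivityDefects R) ≤ J by rwa [← Iid_eq_span_additivityDefects] at this
  rw [Ideal.span_le]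
  rintro _ ⟨r, s, rfl⟩
  obtain ⟨u, rfl⟩ := surjective_frobenius R p r
  obtain ⟨v, rfl⟩ := surjective_frobenius R p s
  set f := Ideal.Quotient.mk J
  set d : ZR R := single u 1 + single v 1 - single (u + v) 1
  have hp : (p : ZR R ⧸ J) = 0 := by
    rw [← map_natCast f, Ideal.Quotient.eq_zero_iff_mem]
    exact Ideal.mem_sup_left (Ideal.mem_span_singleton_self _)
  have hd : f d ^ 2 = 0 := by
    rw [← map_pow, Ideal.Quotient.eq_zero_iff_mem]
    exact Ideal.mem_sup_right (Ideal.pow_mem_pow (by simp [d, Iid, piHom_single]) 2)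
  have hsingle : ∀ w : R, single (frobenius R p w) (1 : ℤ) = single w 1 ^ p := fun w => by
    rw [frobenius_def, single_pow, one_pow]
  rw [← map_add, hsingle, hsingle, hsingle,
    show single (u + v) (1 : ℤ) = single u 1 + single v 1 + -d by ring, SetLike.mem_coe,
    ← Ideal.Quotient.eq_zero_iff_mem, map_sub, map_add, map_pow, map_pow, map_pow, map_add,
    map_add, map_neg, add_pow_prime_of_natCast_eq_zero Fact.out hp,
    add_pow_prime_of_natCast_eq_zero Fact.out hp, neg_pow,
    pow_eq_zero_of_le (Fact.out : p.Prime).two_le hd]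
  ring

end MonoidAlgebra

section WittVector

variable (p : ℕ) [Fact p.Prime]

noncomputable def teichmullerHom (R : Type*) [CommRing R] : ZR R →+* WittVector p R :=
  (lift ℤ (WittVector p R) R (WittVector.teichmuller p)).toRingHom

theorem constantCoeff_comp_teichmullerHom (R : Type*) [CommRing R] :
    WittVector.constantCoeff.comp (teichmullerHom p R) = piHom R :=
  ZR.ringHom_ext fun r => by simp [teichmullerHom, lift_single, piHom_single]

variable {K : Type*} [Field K] [CharP K p] [PerfectRing K p]

theorem comap_teichmullerHom_maximalIdeal :
    (IsLocalRing.maximalIdeal (WittVector p K)).comap (teichmullerHom p K) = Iid K := by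
  ext x
  rw [Ideal.mem_comap, IsLocalRing.mem_maximalIdeal, mem_nonunits_iff, Iid, RingHom.mem_ker,
    ← constantCoeff_comp_teichmullerHom p K, RingHom.comp_apply, not_iff_comm]
  refine ⟨WittVector.isUnit_of_coeff_zero_ne_zero _, fun hu => ?_⟩
  exact (hu.map WittVector.constantCoeff).ne_zero

theorem mem_Iid_of_pow_mul_mem {ν : ℕ} {a : ZR K}
    (h : (p : ZR K) ^ ν * a ∈ Iid K ^ (ν + 1)) : a ∈ Iid K := by
  have hmax := (WittVector.irreducible p).maximalIdeal_eq (R := WittVector p K)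
  rw [← comap_teichmullerHom_maximalIdeal p] at h ⊢
  replace h := Ideal.le_comap_pow _ _ h
  rw [Ideal.mem_comap, hmax, Ideal.span_singleton_pow, Ideal.mem_span_singleton, map_mul, map_pow,
    map_natCast, pow_succ, mul_dvd_mul_iff_left (pow_ne_zero _ (WittVector.p_nonzero p K))] at h
  rw [Ideal.mem_comap, hmax]
  exact Ideal.mem_span_singleton.mpr h

end WittVector

section CR

variable {K : Type*} [Field K]

instance Iid_isMaximal : (Iid K).IsMaximal :=
  RingHom.ker_isMaximal_of_surjective _ piHom_surjective

theorem CtoR_eq_piHom_of_mk_eq (x : CR K) {a : ZR K}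
    (ha : Ideal.Quotient.mk (Iid K ^ 1) a = x.1 1) : CtoR K x = piHom K a := by
  change Ideal.Quotient.lift _ _ (fun _ ha => ha) (Ideal.quotEquivOfEq (pow_one _) (x.1 1)) = _
  rw [← ha]
  rfl

theorem CtoR_surjective : Function.Surjective (CtoR K) := fun r =>
  ⟨CofRingHom _ _ (single r 1), by rw [CtoR_eq_piHom_of_mk_eq _ rfl, piHom_single]⟩

theorem CR.isUnit_of_CtoR_ne_zero {x : CR K} (hx : CtoR K x ≠ 0) : IsUnit x := by
  refine Clim.isUnit_of_forall_isUnit x fun ν => ?_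
  obtain ⟨a, ha⟩ := Ideal.Quotient.mk_surjective (x.1 (ν + 1))
  rw [← ha]
  refine Ideal.Quotient.isUnit_mk_pow_of_notMem _ ?_
  rwa [Iid, RingHom.mem_ker, ← CtoR_eq_piHom_of_mk_eq x (Clim.mk_eq_apply_of_le x ha (by omega))]

variable (p : ℕ) [Fact p.Prime] [CharP K p] [PerfectRing K p]

theorem mem_Iid_pow_of_natCast_mul_mem {m : ℕ} {a : ZR K}
    (h : (p : ZR K) * a ∈ Iid K ^ (m + 1)) : a ∈ Iid K ^ m := by
  induction m generalizing a with
  | zero => simp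
  | succ m ih =>
    have hpI : Ideal.span {(p : ZR K)} ≤ Iid K :=
      Ideal.span_le.mpr (Set.singleton_subset_iff.mpr (natCast_mem_Iid p))
    obtain ⟨_, hc, e, he, rfl⟩ := Submodule.mem_sup.mp
      (Ideal.pow_le_pow_sup_pow_succ_of_le_sup_sq hpI (Iid_le_span_natCast_sup_sq p) m
        (ih (Ideal.pow_le_pow_right (by omega) h)))
    obtain ⟨t, rfl⟩ := Ideal.mem_span_singleton'.mp (Ideal.span_singleton_pow (p : ZR K) m ▸ hc)
    have hpe : (p : ZR K) * e ∈ Iid K ^ (m + 2) :=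
      pow_succ' (Iid K) (m + 1) ▸ Ideal.mul_mem_mul (natCast_mem_Iid p) he
    have ht : t ∈ Iid K :=
      mem_Iid_of_pow_mul_mem p (ν := m + 1) (by convert sub_mem h hpe using 1; ring)
    refine add_mem ?_ he
    rw [pow_succ']
    exact Ideal.mul_mem_mul ht (Ideal.pow_mem_pow (natCast_mem_Iid p) m)

theorem ker_CtoR : RingHom.ker (CtoR K) = Ideal.span {(p : CR K)} := by
  refine le_antisymm (fun x hx => ?_) ?_
  · obtain ⟨a, ha⟩ := Ideal.Quotient.mk_surjective (x.1 1)
    have hx1 : x.1 1 = 0 := by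
      rw [← ha, Ideal.Quotient.eq_zero_iff_mem, pow_one, Iid, RingHom.mem_ker,
        ← CtoR_eq_piHom_of_mk_eq x ha]
      exact hx
    obtain ⟨y, rfl⟩ := Clim.exists_eq_mul_of_apply_one_eq_zero (p : ZR K)
      (Ideal.le_sup_pow_succ_of_le_sup_sq (Iid_le_span_natCast_sup_sq p))
      (fun _ _ => mem_Iid_pow_of_natCast_mul_mem p) x hx1
    rw [map_natCast]
    exact Ideal.mul_mem_right _ _ (Ideal.mem_span_singleton_self _)
  · rw [Ideal.span_le, Set.singleton_subset_iff, SetLike.mem_coe, RingHom.mem_ker, map_natCast,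
      CharP.cast_eq_zero]

theorem CR.natCast_pow_ne_zero (k : ℕ) : (p : CR K) ^ k ≠ 0 := by
  intro h
  have hk : Ideal.Quotient.mk (Iid K ^ (k + 1)) ((p : ZR K) ^ k) = 0 := by
    rw [← map_natCast (CofRingHom (ZR K) (Iid K)), ← map_pow] at h
    exact congrArg (fun x : CR K => x.1 (k + 1)) h
  rw [Ideal.Quotient.eq_zero_iff_mem, ← mul_one ((p : ZR K) ^ k)] at hk
  exact (Ideal.ne_top_iff_one _).mp (Iid_isMaximal (K := K)).ne_top (mem_Iid_of_pow_mul_mem p hk)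

theorem CR.exists_eq_pow_mul_of_ne_zero {x : CR K} (hx : x ≠ 0) :
    ∃ (n : ℕ) (u : CR K), IsUnit u ∧ x = (p : CR K) ^ n * u := by
  suffices key : ∀ μ (x : CR K), x.1 μ ≠ 0 → ∃ (n : ℕ) (u : CR K), IsUnit u ∧ x = p ^ n * u by
    obtain ⟨μ, hμ⟩ : ∃ μ, x.1 μ ≠ 0 := by
      by_contra! h
      exact hx (Subtype.ext (funext h))
    exact key μ x hμ
  intro μ
  induction μ with
  | zero =>
    intro x hx
    obtain ⟨a, ha⟩ := Ideal.Quotient.mk_surjective (x.1 0)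
    rw [← ha, Ne, Ideal.Quotient.eq_zero_iff_mem, pow_zero, Ideal.one_eq_top] at hx
    exact absurd Submodule.mem_top hx
  | succ μ ih =>
    intro x hx
    by_cases h : CtoR K x = 0
    · have hxp : x ∈ Ideal.span {(p : CR K)} := by rw [← ker_CtoR p]; exact h
      obtain ⟨y, rfl⟩ := Ideal.mem_span_singleton.mp hxp
      have hy : y.1 μ ≠ 0 := fun hy => hx (by
        rw [← map_natCast (CofRingHom (ZR K) (Iid K))]
        exact Clim.apply_succ_mul_eq_zero (natCast_mem_Iid p) y hy)
      obtain ⟨n, u, hu, rfl⟩ := ih y hy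
      exact ⟨n + 1, u, hu, by ring⟩
    · exact ⟨0, x, CR.isUnit_of_CtoR_ne_zero h, by rw [pow_zero, one_mul]⟩

include p in
theorem CR.isDomain : IsDomain (CR K) := by
  have : Nontrivial (CR K) := (CtoR K).domain_nontrivial
  have : NoZeroDivisors (CR K) := ⟨fun {x y} hxy => by
    by_contra! h
    obtain ⟨m, u, hu, rfl⟩ := CR.exists_eq_pow_mul_of_ne_zero p h.1
    obtain ⟨n, v, hv, rfl⟩ := CR.exists_eq_pow_mul_of_ne_zero p h.2
    refine CR.natCast_pow_ne_zero p (m + n) ((hu.mul hv).mul_left_eq_zero.mp ?_)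
    rw [← hxy]
    ring⟩
  exact NoZeroDivisors.to_isDomain _

include p in
/-- `π̄` forces a prime characteristic of the domain `C(K)` to be `p`, but `p ≠ 0` in `C(K)`. -/
theorem CR.charZero : CharZero (CR K) := by
  have := CR.isDomain (K := K) p
  obtain ⟨q, hq⟩ := CharP.exists (CR K)
  rcases CharP.char_is_prime_or_zero (CR K) q with hq_prime | rfl
  · have hpq : p ∣ q := by
      rw [← CharP.cast_eq_zero_iff K p, ← map_natCast (CtoR K), CharP.cast_eq_zero, map_zero]
    rw [← (Nat.prime_dvd_prime_iff_eq Fact.out hq_prime).mp hpq] at hq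
    exact absurd (pow_one (p : CR K) ▸ CharP.cast_eq_zero (CR K) p) (CR.natCast_pow_ne_zero p 1)
  · exact CharP.charP_to_charZero (CR K)

end CR

/-- Let `p` be a prime and `K` a perfect field of characteristic `p`.
Then `C(K)` is a discrete valuation ring of characteristic `0` whose maximal ideal is
generated by `p`, and whose residue field `C(K)/p·C(K)` is isomorphic to `K` via the map
`π̄` induced by `π`. -/
theorem statement9 (p : ℕ) [Fact p.Prime] (K : Type*) [Field K] [CharP K p]
    (hperf : Function.Bijective fun x : K => x ^ p) :
    CharZero (CR K) ∧
    (Ideal.span {(p : CR K)}).IsMaximal ∧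
    (∀ M : Ideal (CR K), M.IsMaximal → M = Ideal.span {(p : CR K)}) ∧
    Function.Surjective (CtoR K) ∧
    RingHom.ker (CtoR K) = Ideal.span {(p : CR K)} ∧
    ∃ h : IsDomain (CR K), @IsDiscreteValuationRing (CR K) _ h := by
  have : PerfectRing K p := ⟨hperf⟩
  have hdom := CR.isDomain (K := K) p
  have hmax : (Ideal.span {(p : CR K)}).IsMaximal :=
    ker_CtoR (K := K) p ▸ RingHom.ker_isMaximal_of_surjective _ CtoR_surjective
  have hprime : Prime (p : CR K) :=
    (Ideal.span_singleton_prime (pow_one (p : CR K) ▸ CR.natCast_pow_ne_zero p 1)).mp hmax.isPrime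
  refine ⟨CR.charZero p, hmax, fun M hM => hM.eq_of_le hmax.ne_top fun x hxM => ?_,
    CtoR_surjective, ker_CtoR p, hdom, ?_⟩
  · rw [← ker_CtoR p, RingHom.mem_ker]
    by_contra hx
    exact hM.ne_top (M.eq_top_of_isUnit_mem hxM (CR.isUnit_of_CtoR_ne_zero hx))
  · refine .ofHasUnitMulPowIrreducibleFactorization ⟨p, hprime.irreducible, fun hx => ?_⟩
    obtain ⟨n, u, hu, rfl⟩ := CR.exists_eq_pow_mul_of_ne_zero p hx
    exact ⟨n, hu.unit, rfl⟩
end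

section
/- Let p be a prime, R a perfect 𝔽_p-algebra, and n ≥ 1. There is a unique ring homomorphism α_n : ℤR/I^n → W_n(R) to the ring of p-typical Witt vectors of length n over R such that α_n sends the class of [r] to the Teichmüller representative of r for every r ∈ R; this α_n commutes with the projections of both rings onto R, and α_n is a ring isomorphism. -/
set_option synthInstance.maxHeartbeats 1000000
set_option maxHeartbeats 1000000

open MonoidAlgebra

/-- The projection `ℤR/I^n → R` induced by `π` (for `n ≠ 0`, using `I^n ≤ I`). -/
noncomputable def piBarN (R : Type*) [CommRing R] (n : ℕ) (hn : n ≠ 0) :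
    ZR R ⧸ Iid R ^ n →+* R :=
  Ideal.Quotient.lift _ (piHom R)
    (fun _ ha => RingHom.mem_ker.mp (Ideal.pow_le_self hn ha))

/-!
The Teichmüller map `τ : R → W(R)` is multiplicative, so it extends to a ring map `ℤR → W(R)`.
Its zeroth coefficient is `π`, so it sends `I` into `ker(W(R) → R) = p W(R)` and `I^n` into
`p^n W(R) = ker(W(R) → W_n(R))` (`R` being perfect); this gives `α_n`, which is unique because
the `[r]` generate `ℤR`.

For bijectivity, every element of `ℤR` is congruent modulo `I^n` to some `∑_{i<n} [y_i] p^i`.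
This follows from `I ⊆ (p) + I²`, which rests on `p`-th roots in `R`: `[a] + [b] - [a + b]` is
`p [y]` modulo `I²` for some `y`. On the Witt side, the `i`-th coefficient of
`∑_{i<n} τ(y_i) p^i` is `y_i ^ p ^ i`, and `y ↦ y ^ p ^ i` is bijective.
-/

open WittVector

namespace ZR

variable {R : Type*} [CommRing R]

theorem piHom_of (r : R) : piHom R (of ℤ R r) = r := by
  simp [piHom]

theorem sub_of_piHom_mem_Iid (x : ZR R) : x - of ℤ R (piHom R x) ∈ Iid R := by
  simp [Iid, RingHom.mem_ker, piHom]

theorem of_zero_mem_Iid_pow {n : ℕ} (hn : n ≠ 0) : of ℤ R 0 ∈ Iid R ^ n := by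
  have h : of ℤ R 0 ∈ Iid R := by simp [Iid, RingHom.mem_ker, piHom]
  simpa [← map_pow, zero_pow hn] using Ideal.pow_mem_pow h n

theorem natCast_mem_Iid (p : ℕ) [CharP R p] : (p : ZR R) ∈ Iid R := by
  simp [Iid, RingHom.mem_ker]

theorem quotient_ringHom_ext {J : Ideal (ZR R)} {S : Type*} [Semiring S]
    {f g : ZR R ⧸ J →+* S}
    (h : ∀ r : R, f (Ideal.Quotient.mk J (of ℤ R r)) = g (Ideal.Quotient.mk J (of ℤ R r))) :
    f = g :=
  Ideal.Quotient.ringHom_ext <| ringHom_ext' (RingHom.ext_int _ _) (MonoidHom.ext h)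

variable (p : ℕ) [CharP R p]

theorem mk_natCast_mul_eq (w : ZR R) :
    Ideal.Quotient.mk (Iid R ^ 2) (p * w) = Ideal.Quotient.mk _ (p * of ℤ R (piHom R w)) := by
  rw [Ideal.Quotient.eq, ← mul_sub, sq]
  exact Ideal.mul_mem_mul (natCast_mem_Iid p) (sub_of_piHom_mem_Iid w)

noncomputable def natCastMulOfModSq : R →+ ZR R ⧸ Iid R ^ 2 :=
  AddMonoidHom.mk' (fun y => Ideal.Quotient.mk _ (p * of ℤ R y)) fun a b => by
    rw [← map_add, ← mul_add, mk_natCast_mul_eq p (of ℤ R a + of ℤ R b), map_add (piHom R),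
      piHom_of, piHom_of]

theorem natCastMulOfModSq_piHom (w : ZR R) :
    natCastMulOfModSq p (piHom R w) = Ideal.Quotient.mk _ (p * w) :=
  (mk_natCast_mul_eq p w).symm

variable [Fact p.Prime] [PerfectRing R p]

/-- With `a = α ^ p`, `b = β ^ p` and `δ = [α] + [β] - [α + β] ∈ I`, expanding
`([α] + [β]) ^ p = (δ + [α + β]) ^ p` writes `[a] + [b] - [a + b]` as `δ ^ p + p * w`. -/
theorem mk_of_add_of_sub_of_add_mem_range (a b : R) :
    Ideal.Quotient.mk _ (of ℤ R a + of ℤ R b - of ℤ R (a + b)) ∈ (natCastMulOfModSq p).range := by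
  set α := (powMulEquiv R p).symm a
  set β := (powMulEquiv R p).symm b
  set δ := of ℤ R α + of ℤ R β - of ℤ R (α + β)
  have hδ : δ ∈ Iid R := by simp [δ, Iid, RingHom.mem_ker, piHom]
  obtain ⟨u, hu⟩ := exists_add_pow_prime_eq (Fact.out : p.Prime) (of ℤ R α) (of ℤ R β)
  obtain ⟨v, hv⟩ := exists_add_pow_prime_eq (Fact.out : p.Prime) δ (of ℤ R (α + β))
  have hsplit : of ℤ R a + of ℤ R b - of ℤ R (a + b) =
      δ ^ p + p * (δ * of ℤ R (α + β) * v - of ℤ R α * of ℤ R β * u) := by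
    rw [← powMulEquiv_symm_pow_p R p a, ← powMulEquiv_symm_pow_p R p b, ← add_pow_char,
      map_pow, map_pow, map_pow]
    linear_combination hv - hu
  refine ⟨piHom R (δ * of ℤ R (α + β) * v - of ℤ R α * of ℤ R β * u), ?_⟩
  have hδp : δ ^ p ∈ Iid R ^ 2 :=
    Ideal.pow_le_pow_right (Fact.out : p.Prime).two_le (Ideal.pow_mem_pow hδ p)
  rw [natCastMulOfModSq_piHom, hsplit, map_add (Ideal.Quotient.mk _),
    Ideal.Quotient.eq_zero_iff_mem.mpr hδp, zero_add]

/-- By the previous lemma, `x ↦ x - [π x]` is additive modulo `p [R] + I²`; it kills every `[r]`. -/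
theorem mk_mem_range_of_mem_Iid {z : ZR R} (hz : z ∈ Iid R) :
    Ideal.Quotient.mk _ z ∈ (natCastMulOfModSq p).range := by
  let defect : ZR R →+ (ZR R ⧸ Iid R ^ 2) ⧸ (natCastMulOfModSq p).range :=
    AddMonoidHom.mk'
      (fun x => QuotientAddGroup.mk' _ (Ideal.Quotient.mk _ (x - of ℤ R (piHom R x)))) fun x y => by
      have hxy : x + y - of ℤ R (piHom R (x + y)) = (x - of ℤ R (piHom R x)) +
          (y - of ℤ R (piHom R y)) + (of ℤ R (piHom R x) + of ℤ R (piHom R y) -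
            of ℤ R (piHom R x + piHom R y)) := by
        rw [map_add (piHom R)]; ring
      rw [hxy]
      simp only [map_add, QuotientAddGroup.mk'_apply, add_zero,
        (QuotientAddGroup.eq_zero_iff _).mpr (mk_of_add_of_sub_of_add_mem_range p _ _)]
  have hdefect (x : ZR R) : defect x = 0 := by
    induction x using MonoidAlgebra.induction_on with
    | of r => simp [defect, piHom]
    | add x y hx hy => rw [map_add, hx, hy, add_zero]
    | smul b x hx => rw [map_zsmul, hx, smul_zero]
  have h0 : Ideal.Quotient.mk (Iid R ^ 2) (of ℤ R 0) = 0 :=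
    Ideal.Quotient.eq_zero_iff_mem.mpr (of_zero_mem_Iid_pow two_ne_zero)
  have hz' := (QuotientAddGroup.eq_zero_iff _).mp (hdefect z)
  rwa [RingHom.mem_ker.mp hz, map_sub, h0, sub_zero] at hz'

theorem Iid_le_span_natCast_sup_sq : Iid R ≤ Ideal.span {(p : ZR R)} ⊔ Iid R ^ 2 := by
  intro z hz
  obtain ⟨y, hy⟩ := mk_mem_range_of_mem_Iid p hz
  refine Submodule.mem_sup.mpr ⟨p * of ℤ R y, Ideal.mem_span_singleton'.mpr ⟨_, mul_comm _ _⟩,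
    z - p * of ℤ R y, Ideal.Quotient.eq.mp hy.symm, add_sub_cancel _ _⟩

theorem Iid_pow_le_span_natCast_pow_sup (n : ℕ) :
    Iid R ^ n ≤ Ideal.span {(p : ZR R) ^ n} ⊔ Iid R ^ (n + 1) := by
  induction n with
  | zero => simp [Ideal.one_eq_top]
  | succ n ih =>
    have hspan (k : ℕ) : Ideal.span {(p : ZR R) ^ k} ≤ Iid R ^ k :=
      Ideal.span_le.mpr <| Set.singleton_subset_iff.mpr <| Ideal.pow_mem_pow (natCast_mem_Iid p) k
    calc Iid R ^ (n + 1) = Iid R ^ n * Iid R := pow_succ _ _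
      _ ≤ (Ideal.span {(p : ZR R) ^ n} ⊔ Iid R ^ (n + 1)) *
          (Ideal.span {(p : ZR R)} ⊔ Iid R ^ 2) := Ideal.mul_mono ih (Iid_le_span_natCast_sup_sq p)
      _ ≤ Ideal.span {(p : ZR R) ^ (n + 1)} ⊔ Iid R ^ (n + 1 + 1) := by
        simp only [Ideal.mul_sup, Ideal.sup_mul, Ideal.span_singleton_mul_span_singleton,
          ← pow_succ]
        have hspan₁ : Ideal.span {(p : ZR R)} ≤ Iid R := by simpa using hspan 1
        refine sup_le (sup_le le_sup_left ?_) (sup_le ?_ ?_) <;> refine le_sup_of_le_right ?_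
        · exact (Ideal.mul_mono_right hspan₁).trans_eq (pow_succ ..).symm
        · exact (Ideal.mul_mono_left (hspan n)).trans_eq (pow_add ..).symm
        · exact (Ideal.mul_mono_right (Ideal.pow_le_self two_ne_zero)).trans_eq (pow_succ ..).symm

theorem exists_sub_sum_of_mul_pow_mem_Iid_pow (x : ZR R) (n : ℕ) :
    ∃ y : ℕ → R, x - ∑ i ∈ Finset.range n, of ℤ R (y i) * (p : ZR R) ^ i ∈ Iid R ^ n := by
  induction n with
  | zero => exact ⟨0, by simp [Ideal.one_eq_top]⟩
  | succ n ih =>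
    obtain ⟨y, hy⟩ := ih
    obtain ⟨_, ha, b, hb, hab⟩ := Submodule.mem_sup.mp (Iid_pow_le_span_natCast_pow_sup p n hy)
    obtain ⟨w, rfl⟩ := Ideal.mem_span_singleton'.mp ha
    refine ⟨Function.update y n (piHom R w), ?_⟩
    have hsum : ∑ i ∈ Finset.range (n + 1), of ℤ R (Function.update y n (piHom R w) i) *
        (p : ZR R) ^ i =
        ∑ i ∈ Finset.range n, of ℤ R (y i) * (p : ZR R) ^ i + of ℤ R (piHom R w) * p ^ n := by
      rw [Finset.sum_range_succ, Function.update_self]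
      congr 1
      exact Finset.sum_congr rfl fun i hi => by
        rw [Function.update_of_ne (Finset.mem_range.mp hi).ne]
    rw [hsum, ← sub_sub, ← hab, show w * p ^ n + b - of ℤ R (piHom R w) * p ^ n =
      (w - of ℤ R (piHom R w)) * p ^ n + b by ring]
    refine add_mem ?_ hb
    rw [pow_succ']
    exact Ideal.mul_mem_mul (sub_of_piHom_mem_Iid w) (Ideal.pow_mem_pow (natCast_mem_Iid p) n)

end ZR

section TeichmullerLift

variable (p : ℕ) [Fact p.Prime] {R : Type*} [CommRing R]

theorem WittVector.coeff_sum_teichmuller_mul_pow [CharP R p] (y : ℕ → R) {m n : ℕ} (hm : m < n) :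
    (∑ i ∈ Finset.range n, teichmuller p (y i) * (p : WittVector p R) ^ i).coeff m =
      y m ^ p ^ m := by
  have heq {k i : ℕ} (h : (teichmuller p (y i) * (p : WittVector p R) ^ i).coeff k ≠ 0) : k = i :=
    of_not_not (mt (teichmuller_mul_pow_coeff_of_ne _) h)
  rw [sum_coeff_eq_coeff_sum _ fun k => ⟨fun a b => Subtype.ext ((heq a.2.2).symm.trans
    (heq b.2.2))⟩, Finset.sum_eq_single m]
  · exact teichmuller_mul_pow_coeff m (y m)
  · exact fun i _ hi => teichmuller_mul_pow_coeff_of_ne _ (Ne.symm hi)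
  · exact fun h => absurd (Finset.mem_range.mpr hm) h

variable (R) in
noncomputable def teichmullerLift : ZR R →+* WittVector p R :=
  (MonoidAlgebra.lift ℤ (WittVector p R) R (teichmuller p)).toRingHom

theorem teichmullerLift_of (r : R) : teichmullerLift p R (of ℤ R r) = teichmuller p r := by
  simp [teichmullerLift]

theorem constantCoeff_comp_teichmullerLift :
    constantCoeff.comp (teichmullerLift p R) = piHom R :=
  ringHom_ext' (RingHom.ext_int _ _) <| MonoidHom.ext fun r => by
    change constantCoeff (teichmullerLift p R (of ℤ R r)) = piHom R (of ℤ R r)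
    rw [teichmullerLift_of, ZR.piHom_of, constantCoeff_apply, teichmuller_coeff_zero]

variable [CharP R p] [PerfectRing R p]

theorem map_Iid_pow_le_ker_truncate (n : ℕ) :
    (Iid R ^ n).map (teichmullerLift p R) ≤ RingHom.ker (truncate (p := p) (R := R) n) := by
  have hI : (Iid R).map (teichmullerLift p R) ≤ Ideal.span {(p : WittVector p R)} := by
    rw [Ideal.map_le_iff_le_comap, ← ker_constantCoeff, RingHom.comap_ker,
      constantCoeff_comp_teichmullerLift]
    exact le_rfl
  intro x hx
  rw [Ideal.map_pow] at hx
  have hpn := Ideal.span_singleton_pow (p : WittVector p R) n ▸ Ideal.pow_right_mono hI n hx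
  rw [RingHom.mem_ker, ← RingHom.mem_ker, mem_ker_truncate]
  exact (mem_span_p_pow_iff_le_coeff_eq_zero x n).mp hpn

variable (R) in
noncomputable def truncatedTeichmullerLift (n : ℕ) :
    ZR R ⧸ Iid R ^ n →+* TruncatedWittVector p n R :=
  Ideal.Quotient.lift _ ((truncate n).comp (teichmullerLift p R)) fun _ hz =>
    map_Iid_pow_le_ker_truncate p n (Ideal.mem_map_of_mem _ hz)

variable {n : ℕ}

theorem truncatedTeichmullerLift_mk (z : ZR R) :
    truncatedTeichmullerLift p R n (Ideal.Quotient.mk _ z) = truncate n (teichmullerLift p R z) :=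
  Ideal.Quotient.lift_mk ..

theorem coeff_truncatedTeichmullerLift_mk_sum (y : ℕ → R) (m : Fin n) :
    (truncatedTeichmullerLift p R n (Ideal.Quotient.mk _
      (∑ i ∈ Finset.range n, of ℤ R (y i) * (p : ZR R) ^ i))).coeff m = y m ^ p ^ (m : ℕ) := by
  rw [truncatedTeichmullerLift_mk, coeff_truncate]
  simp only [map_sum, map_mul, map_pow, map_natCast, teichmullerLift_of]
  exact coeff_sum_teichmuller_mul_pow p y m.2

theorem coeff_zero_truncatedTeichmullerLift (hn : 0 < n) (x : ZR R ⧸ Iid R ^ n) :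
    (truncatedTeichmullerLift p R n x).coeff ⟨0, hn⟩ = piBarN R n hn.ne' x := by
  obtain ⟨z, rfl⟩ := Ideal.Quotient.mk_surjective x
  rw [truncatedTeichmullerLift_mk, coeff_truncate, piBarN, Ideal.Quotient.lift_mk,
    ← constantCoeff_comp_teichmullerLift p]
  rfl

theorem truncatedTeichmullerLift_injective :
    Function.Injective (truncatedTeichmullerLift p R n) := by
  rw [injective_iff_map_eq_zero]
  intro x hx
  obtain ⟨z, rfl⟩ := Ideal.Quotient.mk_surjective x
  obtain ⟨y, hy⟩ := ZR.exists_sub_sum_of_mul_pow_mem_Iid_pow p z n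
  rw [Ideal.Quotient.eq.mpr hy] at hx ⊢
  have hy0 (i : ℕ) (hi : i < n) : y i = 0 := by
    have hcoeff := congrArg (TruncatedWittVector.coeff ⟨i, hi⟩) hx
    rw [coeff_truncatedTeichmullerLift_mk_sum, TruncatedWittVector.coeff_zero] at hcoeff
    exact (bijective_iterateFrobenius R p i).injective (by rwa [map_zero, iterateFrobenius_def])
  refine Ideal.Quotient.eq_zero_iff_mem.mpr (Ideal.sum_mem _ fun i hi => ?_)
  have hin : i < n := Finset.mem_range.mp hi
  rw [hy0 i hin]
  exact Ideal.mul_mem_right _ _ (ZR.of_zero_mem_Iid_pow (Nat.ne_zero_of_lt hin))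

theorem truncatedTeichmullerLift_surjective :
    Function.Surjective (truncatedTeichmullerLift p R n) := by
  intro t
  obtain ⟨w, rfl⟩ := truncate_surjective p n R t
  refine ⟨Ideal.Quotient.mk _ (∑ i ∈ Finset.range n,
    of ℤ R ((powMulEquiv R (p ^ i)).symm (w.coeff i)) * (p : ZR R) ^ i), ?_⟩
  ext m
  rw [coeff_truncatedTeichmullerLift_mk_sum, coeff_truncate, powMulEquiv_symm_pow_p]

end TeichmullerLift

/-- Let `p` be a prime, `R` a perfect `𝔽_p`-algebra and `n ≥ 1`. There is a
unique ring homomorphism `α_n : ℤR/I^n → W_n(R)` to the length-`n` truncated `p`-typical Witt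
vectors sending the class of `[r]` to the Teichmüller representative of `r` for every `r ∈ R`;
moreover `α_n` commutes with the projections of both rings onto `R` and is a ring
isomorphism. -/
theorem statement14 (p : ℕ) [Fact p.Prime] (R : Type*) [CommRing R] [CharP R p]
    (hperf : Function.Bijective fun x : R => x ^ p) (n : ℕ) (hn : 1 ≤ n) :
    (∃! α : ZR R ⧸ Iid R ^ n →+* TruncatedWittVector p n R,
      ∀ r : R, α (Ideal.Quotient.mk _ (of ℤ R r)) =
        WittVector.truncate n (WittVector.teichmuller p r)) ∧
    ∀ α : ZR R ⧸ Iid R ^ n →+* TruncatedWittVector p n R,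
      (∀ r : R, α (Ideal.Quotient.mk _ (of ℤ R r)) =
        WittVector.truncate n (WittVector.teichmuller p r)) →
      (∀ x, (α x).coeff ⟨0, hn⟩ = piBarN R n (Nat.one_le_iff_ne_zero.mp hn) x) ∧
      Function.Bijective α := by
  have : PerfectRing R p := ⟨hperf⟩
  have hlift (r : R) : truncatedTeichmullerLift p R n (Ideal.Quotient.mk _ (of ℤ R r)) =
      truncate n (teichmuller p r) := by
    rw [truncatedTeichmullerLift_mk, teichmullerLift_of]
  have huniq (α : ZR R ⧸ Iid R ^ n →+* TruncatedWittVector p n R)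
      (hα : ∀ r : R, α (Ideal.Quotient.mk _ (of ℤ R r)) = truncate n (teichmuller p r)) :
      α = truncatedTeichmullerLift p R n :=
    ZR.quotient_ringHom_ext fun r => (hα r).trans (hlift r).symm
  refine ⟨⟨_, hlift, huniq⟩, fun α hα => ?_⟩
  obtain rfl := huniq α hα
  exact ⟨coeff_zero_truncatedTeichmullerLift p hn, truncatedTeichmullerLift_injective p,
    truncatedTeichmullerLift_surjective p⟩
end
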